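/- (Symmetric factorization of ordinary powers) If y x = Q x y with Q invertible central, then (x+y)^n = (x+Q^{-(n-1)} y)(x+Q^{-(n-3)} y)···(x+Q^{n-3} y)(x+Q^{n-1} y), i.e. the ordinary n-th power of x+y factors as the left-to-right product prod_{k=0}^{n-1}(x + Q^{2k-(n-1)} y). -/
import Mathlib

/-- Left-to-right ordered product `f 0 * f 1 * ⋯ * f (n-1)`. -/
def ascProd {A : Type*} [Ring A] (f : ℕ → A) : ℕ → A
  | 0 => 1
  | n + 1 => ascProd f n * f n

section
variable {R : Type*} [CommRing R] {A : Type*} [Ring A] [Algebra R A]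
  (Q : Rˣ) (x y : A)

lemma swap_lemma (hyx : y * x = (Q : R) • (x * y)) (a b : R) :
    (x + a • y) * (x + b • y)
      = (x + (((Q⁻¹ : Rˣ) : R) * b) • y) * (x + ((Q : R) * a) • y) := by
  have hQ : ((Q⁻¹ : Rˣ) : R) * (Q : R) = 1 := by
    rw [← Units.val_mul, inv_mul_cancel]; rfl
  simp only [mul_add, add_mul, smul_mul_assoc, mul_smul_comm, hyx, smul_smul]
  match_scalars <;>
    first
      | ring1
      | linear_combination (-b) * hQ
      | linear_combination (-(a*b)) * hQ

lemma key_lemma (hyx : y * x = (Q : R) • (x * y)) (n : ℕ) :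
    (x + y) ^ (n + 1)
      = (x + ((Q⁻¹ : Rˣ) : R) • y) ^ n * (x + ((Q : R) ^ n) • y) := by
  induction n with
  | zero => simp
  | succ n ih =>
    have h1 : (x + ((Q⁻¹ : Rˣ) : R) • y) ^ (n + 1) * (x + ((Q : R) ^ (n+1)) • y)
        = (x + ((Q⁻¹ : Rˣ) : R) • y) ^ n
            * ((x + ((Q⁻¹ : Rˣ) : R) • y) * (x + ((Q : R) ^ (n+1)) • y)) := by
      rw [pow_succ, mul_assoc]
    rw [h1, swap_lemma Q x y hyx]
    have e1 : ((Q⁻¹ : Rˣ) : R) * (Q : R) ^ (n + 1) = (Q : R) ^ n := by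
      rw [← Units.val_pow_eq_pow_val, ← Units.val_pow_eq_pow_val, ← Units.val_mul]
      congr 1
      group
    have e2 : (Q : R) * ((Q⁻¹ : Rˣ) : R) = 1 := by
      rw [← Units.val_mul, mul_inv_cancel]; rfl
    rw [e1, e2, one_smul, ← mul_assoc, ← ih, pow_succ]
end

/-- symmetric factorization of ordinary powers: if `y x = Q (x y)`
    with `Q` invertible, then
    `(x+y)^n = (x+Q^{-(n-1)}y)(x+Q^{-(n-3)}y)⋯(x+Q^{n-3}y)(x+Q^{n-1}y)`,
    i.e. the left-to-right product `∏_{k=0}^{n-1} (x + Q^{2k-(n-1)} y)`. -/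
theorem symmetric_power_factorization {R : Type*} [CommRing R] {A : Type*}
    [Ring A] [Algebra R A] (Q : Rˣ) (x y : A)
    (hyx : y * x = (Q : R) • (x * y)) (n : ℕ) :
    (x + y) ^ n
      = ascProd (fun k => x + ((Q ^ (2 * (k : ℤ) - ((n : ℤ) - 1)) : Rˣ) : R) • y) n := by
  induction n generalizing y with
  | zero => simp [ascProd]
  | succ n ih =>
    have hyx' : (((Q⁻¹ : Rˣ) : R) • y) * x = (Q : R) • (x * (((Q⁻¹ : Rˣ) : R) • y)) := by
      rw [smul_mul_assoc, hyx, mul_smul_comm, smul_smul, smul_smul, mul_comm]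
    have ihq := ih (((Q⁻¹ : Rˣ) : R) • y) hyx'
    rw [key_lemma Q x y hyx, ihq]
    show ascProd _ n * _ = ascProd _ (n+1)
    rw [ascProd]
    congr 1
    · apply congrArg (fun f => ascProd f n)
      funext k
      rw [smul_smul]
      congr 1
      rw [← Units.val_mul]
      congr 1
      rw [← zpow_neg_one, ← zpow_add]
      congr 1
      push_cast; ring
    · congr 1
      rw [show (2 * (n : ℤ) - (((n:ℕ)+1 : ℕ) - 1 : ℤ)) = (n : ℤ) by push_cast; ring,
        zpow_natCast, Units.val_pow_eq_pow_val]
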